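/- Let U be a finite set of integers each at least 3, let 𝒟 be a family of nonempty subsets of U, and let 𝒞, 𝒞' ⊆ 𝒟 be exact covers of U. In the forest F = F(U,𝒟), let S consist of the eight isolated vertices of F together with all star leaves of T_D for all D ∈ 𝒞, and let S' consist of the eight isolated vertices of F together with all star leaves of T_D for all D ∈ 𝒞'. Let S_0, …, S_ℓ be a TJ-sequence of feasible sets from S to S' of minimum length, and for each index m let 𝒮_m = {D ∈ 𝒟 : T_D is full under S_m}. If S_i and S_{i'} are clean, i + 1 < i', and S_j is not clean for every j with i < j < i', then 𝒮_{i'} is obtained from 𝒮_i by a split or by a merge. -/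

import Mathlib

/-! The forest `F = F(U, 𝒟)` for a finite set `U` of integers (each at least 3) and a
family `𝒟` of nonempty subsets of `U`.  For each `D ∈ 𝒟` it has a tree `T_D`
consisting of a root, two antennae (leaves attached to the root) and, for each
`d ∈ D`, a star with center adjacent to the root and exactly `d` star leaves;
in addition there are eight isolated vertices.  We realise the vertex set as the
valid vertices of the following inductive type. -/

/-- Potential vertices of the forest `F(U, 𝒟)`. -/
inductive FV where
  /-- the eight isolated vertices (`n < 8`) -/
  | iso : ℕ → FV
  /-- the root of the tree `T_D` -/
  | root : Finset ℕ → FV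
  /-- the two antennae of `T_D` (`a < 2`) -/
  | antenna : Finset ℕ → ℕ → FV
  /-- the center of the star of `T_D` corresponding to `d ∈ D` -/
  | center : Finset ℕ → ℕ → FV
  /-- the `j`-th star leaf (`j < d`) of the star of `T_D` corresponding to `d ∈ D` -/
  | leaf : Finset ℕ → ℕ → ℕ → FV
deriving DecidableEq

/-- The vertices of the forest `F(U, 𝒟)` are exactly the valid ones. -/
def FV.valid (𝒟 : Finset (Finset ℕ)) : FV → Prop
  | .iso n => n < 8
  | .root D => D ∈ 𝒟
  | .antenna D a => D ∈ 𝒟 ∧ a < 2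
  | .center D d => D ∈ 𝒟 ∧ d ∈ D
  | .leaf D d j => D ∈ 𝒟 ∧ d ∈ D ∧ j < d

/-- Star leaves. -/
def FV.isStarLeaf : FV → Bool
  | .leaf _ _ _ => true
  | _ => false

/-- The star of `T_D` for `d ∈ D` is full under `R`: `R` contains all its star leaves. -/
def starFull (D : Finset ℕ) (d : ℕ) (R : Finset FV) : Prop :=
  ∀ j < d, FV.leaf D d j ∈ R

/-- The star of `T_D` for `d ∈ D` is empty under `R`: `R` contains none of its star leaves. -/
def starEmpty (D : Finset ℕ) (d : ℕ) (R : Finset FV) : Prop :=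
  ∀ j < d, FV.leaf D d j ∉ R

/-- A star is clean if it is full or empty. -/
def starClean (D : Finset ℕ) (d : ℕ) (R : Finset FV) : Prop :=
  starFull D d R ∨ starEmpty D d R

/-- The tree `T_D` is full under `R`: `R` contains all star leaves of `T_D`. -/
def treeFull (D : Finset ℕ) (R : Finset FV) : Prop :=
  ∀ d ∈ D, starFull D d R

/-- The tree `T_D` is empty under `R`: `R` contains no star leaf of `T_D`. -/
def treeEmpty (D : Finset ℕ) (R : Finset FV) : Prop :=
  ∀ d ∈ D, starEmpty D d R

/-- A tree is clean if it is full or empty. -/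
def treeClean (D : Finset ℕ) (R : Finset FV) : Prop :=
  treeFull D R ∨ treeEmpty D R

/-- The tree `T_D` is marked by `R`: both its antennae belong to `R`. -/
def treeMarked (D : Finset ℕ) (R : Finset FV) : Prop :=
  FV.antenna D 0 ∈ R ∧ FV.antenna D 1 ∈ R

instance (D : Finset ℕ) (d : ℕ) (R : Finset FV) : Decidable (starFull D d R) := by
  unfold starFull; infer_instance

instance (D : Finset ℕ) (R : Finset FV) : Decidable (treeFull D R) := by
  unfold treeFull; infer_instance

/-- A set `R ⊆ V(F)` is clean: exactly eight vertices of `R` are not star leaves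
and every tree `T_D` (`D ∈ 𝒟`) is clean under `R`. -/
def CleanSet (𝒟 : Finset (Finset ℕ)) (R : Finset FV) : Prop :=
  (R.filter (fun v => v.isStarLeaf = false)).card = 8 ∧ ∀ D ∈ 𝒟, treeClean D R

/-- A set `R ⊆ V(F)` is feasible: either it is clean, or exactly eight of its
vertices are not star leaves, exactly three trees `T_{D1}, T_{D2}, T_{D3}` are
marked, every other tree is clean, `T_{D1}` is not clean, `T_{D3}` is clean, every
non-clean tree is `T_{D1}` or `T_{D2}`, exactly two stars are marked—one of
`T_{D1}` and one of `T_{D2}`—the marked star of `T_{D1}` is clean iff the marked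
star of `T_{D2}` is, and every unmarked star is clean. -/
def FeasibleSet (𝒟 : Finset (Finset ℕ)) (R : Finset FV) : Prop :=
  CleanSet 𝒟 R ∨
  ((R.filter (fun v => v.isStarLeaf = false)).card = 8 ∧
    ∃ D1 ∈ 𝒟, ∃ D2 ∈ 𝒟, ∃ D3 ∈ 𝒟, D1 ≠ D2 ∧ D1 ≠ D3 ∧ D2 ≠ D3 ∧
      treeMarked D1 R ∧ treeMarked D2 R ∧ treeMarked D3 R ∧
      (∀ D ∈ 𝒟, treeMarked D R → D = D1 ∨ D = D2 ∨ D = D3) ∧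
      (∀ D ∈ 𝒟, D ≠ D1 → D ≠ D2 → D ≠ D3 → treeClean D R) ∧
      ¬ treeClean D1 R ∧ treeClean D3 R ∧
      (∀ D ∈ 𝒟, ¬ treeClean D R → D = D1 ∨ D = D2) ∧
      ∃ d1 ∈ D1, ∃ d2 ∈ D2,
        FV.center D1 d1 ∈ R ∧ FV.center D2 d2 ∈ R ∧
        (∀ D ∈ 𝒟, ∀ d ∈ D, FV.center D d ∈ R →
          (D = D1 ∧ d = d1) ∨ (D = D2 ∧ d = d2)) ∧
        (starClean D1 d1 R ↔ starClean D2 d2 R) ∧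
        (∀ D ∈ 𝒟, ∀ d ∈ D, FV.center D d ∉ R → starClean D d R))

/-- `TJFeasSeq 𝒟 seq ℓ S S'` : `seq 0, …, seq ℓ` is a TJ-sequence of feasible subsets
of `V(F)` from `S` to `S'`. -/
def TJFeasSeq (𝒟 : Finset (Finset ℕ)) (seq : ℕ → Finset FV) (ℓ : ℕ)
    (S S' : Finset FV) : Prop :=
  seq 0 = S ∧ seq ℓ = S' ∧
    (∀ i ≤ ℓ, (∀ v ∈ seq i, v.valid 𝒟) ∧ FeasibleSet 𝒟 (seq i)) ∧
    ∀ i < ℓ, (seq i \ seq (i + 1)).card = 1 ∧ (seq (i + 1) \ seq i).card = 1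

/-- The star leaves of the tree `T_D`, as a finset. -/
def leavesOf (D : Finset ℕ) : Finset FV :=
  D.biUnion fun d => (Finset.range d).image fun j => FV.leaf D d j

/-- The eight isolated vertices of the forest, as a finset. -/
def isoVerts : Finset FV := (Finset.range 8).image FV.iso

/-- The token set associated with a subfamily `𝒞`: the eight isolated vertices
together with all star leaves of `T_D` for all `D ∈ 𝒞`. -/
def tokenSet (𝒞 : Finset (Finset ℕ)) : Finset FV := isoVerts ∪ 𝒞.biUnion leavesOf

/-- A family `C` of subsets of a finite set `U` is an exact cover of `U` if its
members are pairwise disjoint and their union is `U`. -/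
def ExactCover (U : Finset ℕ) (C : Finset (Finset ℕ)) : Prop :=
  (∀ A ∈ C, ∀ B ∈ C, A ≠ B → Disjoint A B) ∧ C.biUnion id = U

/-- `C2` is obtained from `C1` by a split (equivalently `C1` from `C2` by a merge). -/
def SplitOf (C1 C2 : Finset (Finset ℕ)) : Prop :=
  ∃ D1 D2 D3 : Finset ℕ, D2 ≠ D3 ∧ C1 \ C2 = {D1} ∧ C2 \ C1 = {D2, D3}

/-- `C2` is obtained from `C1` by a split or by a merge. -/
def SplitOrMerge (C1 C2 : Finset (Finset ℕ)) : Prop :=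
  SplitOf C1 C2 ∨ SplitOf C2 C1

/-! For each size `s`, count the full stars of size `s`, and count a pair of marked stars that
are not clean as one more full star, of size their total number of tokens. Stars have at least
two leaves, so every token jump between feasible sets preserves this count; on a clean set it is
the number of full trees containing `s`. Hence the families of full trees at the two clean ends of
the phase cover every point equally often.

Inside the phase the antennae cannot move, so the three marked trees stay fixed and the trees
outside them keep their leaves: the two families differ in at most three trees. They do differ,
for otherwise the two ends would differ only in non-leaf tokens, at most `i' - i - 2` of them,
and a clean detour would shorten the minimum-length sequence. Two distinct families of nonempty
sets that differ in at most three members and cover every point equally often differ by a split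
or a merge. -/

open Finset

instance (D : Finset ℕ) (d : ℕ) (R : Finset FV) : Decidable (starEmpty D d R) := by
  unfold starEmpty; infer_instance

instance (D : Finset ℕ) (d : ℕ) (R : Finset FV) : Decidable (starClean D d R) := by
  unfold starClean; infer_instance

theorem sum_add_eq_sum_add_of_eqOn_compl_pair {ι M : Type*} [DecidableEq ι] [AddCommMonoid M]
    {s : Finset ι} {f g : ι → M} {a b : ι} (ha : a ∈ s) (hb : b ∈ s) (hab : a ≠ b)
    (h : ∀ x ∈ s, x ≠ a → x ≠ b → f x = g x) :
    ∑ x ∈ s, f x + (g a + g b) = ∑ x ∈ s, g x + (f a + f b) := by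
  have hb' : b ∈ s.erase a := mem_erase.2 ⟨hab.symm, hb⟩
  have hrest : ∑ x ∈ (s.erase a).erase b, f x = ∑ x ∈ (s.erase a).erase b, g x :=
    sum_congr rfl fun x hx => h x (mem_of_mem_erase (mem_of_mem_erase hx))
      (ne_of_mem_erase (mem_of_mem_erase hx)) (ne_of_mem_erase hx)
  rw [← add_sum_erase s f ha, ← add_sum_erase _ f hb', ← add_sum_erase s g ha,
    ← add_sum_erase _ g hb', hrest]
  abel

theorem card_sdiff_le_of_card_sdiff_succ_le_one {α : Type*} [DecidableEq α] (f : ℕ → Finset α)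
    (n : ℕ) (h : ∀ k < n, #(f k \ f (k + 1)) ≤ 1) : #(f 0 \ f n) ≤ n := by
  induction n with
  | zero => simp
  | succ n ih =>
    calc #(f 0 \ f (n + 1)) ≤ #(f 0 \ f n ∪ f n \ f (n + 1)) := card_le_card (sdiff_triangle ..)
      _ ≤ #(f 0 \ f n) + #(f n \ f (n + 1)) := card_union_le ..
      _ ≤ n + 1 := add_le_add (ih fun k hk => h k (by omega)) (h n (by omega))

/-! ### Token jumps -/

theorem FV.exists_eq_leaf {v : FV} (hv : v.isStarLeaf = true) : ∃ X e j, v = FV.leaf X e j := by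
  cases v <;> simp_all [FV.isStarLeaf]

def TokenJump (R R' : Finset FV) (v w : FV) : Prop :=
  v ∈ R ∧ w ∉ R ∧ R' = insert w (R.erase v)

namespace TokenJump

variable {R R' : Finset FV} {v w x : FV}

theorem exists_of_card_sdiff (h₁ : #(R \ R') = 1) (h₂ : #(R' \ R) = 1) :
    ∃ v w, TokenJump R R' v w := by
  obtain ⟨v, hv⟩ := card_eq_one.1 h₁
  obtain ⟨w, hw⟩ := card_eq_one.1 h₂
  have hv' := fun x => (Finset.ext_iff.1 hv x)
  have hw' := fun x => (Finset.ext_iff.1 hw x)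
  simp only [mem_sdiff, mem_singleton] at hv' hw'
  refine ⟨v, w, ((hv' v).2 rfl).1, ((hw' w).2 rfl).2, ext fun x => ?_⟩
  simp only [mem_insert, mem_erase]
  grind

theorem mem_iff (h : TokenJump R R' v w) : x ∈ R' ↔ x = w ∨ (x ≠ v ∧ x ∈ R) := by
  rw [h.2.2, mem_insert, mem_erase]

theorem mem_iff_of_ne (h : TokenJump R R' v w) (hv : x ≠ v) (hw : x ≠ w) : x ∈ R' ↔ x ∈ R := by
  simp [h.mem_iff, hv, hw]

theorem src_mem (h : TokenJump R R' v w) : v ∈ R := h.1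

theorem tgt_notMem (h : TokenJump R R' v w) : w ∉ R := h.2.1

theorem tgt_mem (h : TokenJump R R' v w) : w ∈ R' := h.mem_iff.2 (Or.inl rfl)

theorem src_notMem (h : TokenJump R R' v w) : v ∉ R' := by
  rw [h.mem_iff]
  rintro (rfl | ⟨hne, -⟩)
  · exact h.tgt_notMem h.src_mem
  · exact hne rfl

theorem symm (h : TokenJump R R' v w) : TokenJump R' R w v := by
  refine ⟨h.tgt_mem, h.src_notMem, ext fun x => ?_⟩
  rw [mem_insert, mem_erase, h.mem_iff]
  have := h.src_mem
  have := h.tgt_notMem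
  grind

theorem card_sdiff (h : TokenJump R R' v w) : #(R \ R') = 1 ∧ #(R' \ R) = 1 := by
  have h₁ : R \ R' = {v} := by
    ext x; rw [mem_sdiff, h.mem_iff, mem_singleton]
    have := h.src_mem; have := h.tgt_notMem; grind
  have h₂ : R' \ R = {w} := by
    ext x; rw [mem_sdiff, h.mem_iff, mem_singleton]
    have := h.tgt_notMem; grind
  simp [h₁, h₂]

theorem card_filter_add (h : TokenJump R R' v w) (p : FV → Prop) [DecidablePred p] :
    #(R'.filter p) + (if p v then 1 else 0) = #(R.filter p) + (if p w then 1 else 0) := by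
  have hv : v ∈ R := h.src_mem
  have hw : w ∉ R := h.tgt_notMem
  rw [h.2.2, filter_insert, filter_erase]
  split_ifs with hpw hpv hpv
  · rw [card_insert_of_notMem (by simp [hw]), card_erase_of_mem (mem_filter.2 ⟨hv, hpv⟩)]
    have := card_pos.2 ⟨v, mem_filter.2 ⟨hv, hpv⟩⟩
    omega
  · rw [card_insert_of_notMem (by simp [hw]), erase_eq_of_notMem (by simp [hpv])]
  · rw [card_erase_of_mem (mem_filter.2 ⟨hv, hpv⟩)]
    have := card_pos.2 ⟨v, mem_filter.2 ⟨hv, hpv⟩⟩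
    omega
  · rw [erase_eq_of_notMem (by simp [hpv])]

end TokenJump

/-! ### Star leaves and leaf counts -/

def starLeaves (D : Finset ℕ) (d : ℕ) : Finset FV := (range d).image (FV.leaf D d)

@[simp] theorem leaf_mem_starLeaves {X D : Finset ℕ} {e d j : ℕ} :
    FV.leaf X e j ∈ starLeaves D d ↔ X = D ∧ e = d ∧ j < d := by
  simp only [starLeaves, mem_image, mem_range, FV.leaf.injEq]
  constructor
  · rintro ⟨j, hj, rfl, rfl, rfl⟩; exact ⟨rfl, rfl, hj⟩
  · rintro ⟨rfl, rfl, hj⟩; exact ⟨j, hj, rfl, rfl, rfl⟩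

theorem card_starLeaves (D : Finset ℕ) (d : ℕ) : #(starLeaves D d) = d := by
  rw [starLeaves, card_image_of_injective _ fun _ _ h => by injection h, card_range]

def leafCount (R : Finset FV) (D : Finset ℕ) (d : ℕ) : ℕ := #{x ∈ R | x ∈ starLeaves D d}

variable {R R' : Finset FV} {D : Finset ℕ} {d : ℕ}

theorem TokenJump.leafCount_add {v w : FV} (h : TokenJump R R' v w) (X : Finset ℕ) (e : ℕ) :
    leafCount R' X e + (if v ∈ starLeaves X e then 1 else 0) =
      leafCount R X e + (if w ∈ starLeaves X e then 1 else 0) :=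
  h.card_filter_add _

theorem leafCount_eq_card_inter : leafCount R D d = #(R ∩ starLeaves D d) := by
  rw [leafCount, filter_mem_eq_inter]

theorem leafCount_le : leafCount R D d ≤ d := by
  rw [leafCount_eq_card_inter]
  exact (card_le_card inter_subset_right).trans_eq (card_starLeaves D d)

theorem starFull_iff_subset : starFull D d R ↔ starLeaves D d ⊆ R := by
  simp only [starFull, starLeaves, image_subset_iff, mem_range]

theorem leafCount_eq_iff_starFull : leafCount R D d = d ↔ starFull D d R := by
  rw [starFull_iff_subset, leafCount_eq_card_inter, ← inter_eq_right]
  constructor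
  · exact fun h => eq_of_subset_of_card_le inter_subset_right (by rw [h, card_starLeaves])
  · intro h; rw [h, card_starLeaves]

theorem leafCount_eq_zero_iff_starEmpty : leafCount R D d = 0 ↔ starEmpty D d R := by
  rw [leafCount, card_eq_zero, filter_eq_empty_iff]
  constructor
  · exact fun h j hj hmem => h hmem (leaf_mem_starLeaves.2 ⟨rfl, rfl, hj⟩)
  · intro h x hx hxL
    obtain ⟨j, hj, rfl⟩ := mem_image.1 hxL
    exact h j (mem_range.1 hj) hx

theorem starClean_iff_leafCount :
    starClean D d R ↔ leafCount R D d = d ∨ leafCount R D d = 0 := by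
  rw [starClean, leafCount_eq_iff_starFull, leafCount_eq_zero_iff_starEmpty]

theorem leafCount_congr (h : ∀ j, FV.leaf D d j ∈ R' ↔ FV.leaf D d j ∈ R) :
    leafCount R' D d = leafCount R D d := by
  rw [leafCount_eq_card_inter, leafCount_eq_card_inter]
  congr 1
  ext x
  simp only [mem_inter, starLeaves, mem_image]
  constructor <;> rintro ⟨hx, j, hj, rfl⟩
  exacts [⟨(h j).1 hx, j, hj, rfl⟩, ⟨(h j).2 hx, j, hj, rfl⟩]

theorem starClean_congr (h : ∀ j, FV.leaf D d j ∈ R' ↔ FV.leaf D d j ∈ R) :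
    starClean D d R' ↔ starClean D d R := by
  rw [starClean_iff_leafCount, starClean_iff_leafCount, leafCount_congr h]

theorem starFull_congr (h : ∀ j, FV.leaf D d j ∈ R' ↔ FV.leaf D d j ∈ R) :
    starFull D d R' ↔ starFull D d R := by
  rw [← leafCount_eq_iff_starFull, ← leafCount_eq_iff_starFull, leafCount_congr h]

theorem treeFull_congr (h : ∀ d j, FV.leaf D d j ∈ R' ↔ FV.leaf D d j ∈ R) :
    treeFull D R' ↔ treeFull D R :=
  forall₂_congr fun d _ => starFull_congr (h d)

theorem treeClean_congr (h : ∀ d j, FV.leaf D d j ∈ R' ↔ FV.leaf D d j ∈ R) :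
    treeClean D R' ↔ treeClean D R := by
  simp only [treeClean, treeEmpty, ← leafCount_eq_zero_iff_starEmpty, leafCount_congr (h _)]
  rw [treeFull_congr h]

theorem not_starClean_of_mem_of_notMem {j j' : ℕ} (hj : j < d) (hj' : j' < d)
    (h : FV.leaf D d j ∈ R) (h' : FV.leaf D d j' ∉ R) : ¬ starClean D d R := by
  rintro (hf | he)
  · exact h' (hf j' hj')
  · exact he j hj h

/-! ### Feasible sets -/

def nonLeaves (R : Finset FV) : Finset FV := R.filter fun v => v.isStarLeaf = false

def stars (𝒟 : Finset (Finset ℕ)) : Finset (Finset ℕ × ℕ) :=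
  𝒟.biUnion fun D => D.image (D, ·)

@[simp] theorem mem_stars {𝒟 : Finset (Finset ℕ)} {p : Finset ℕ × ℕ} :
    p ∈ stars 𝒟 ↔ p.1 ∈ 𝒟 ∧ p.2 ∈ p.1 := by
  simp only [stars, mem_biUnion, mem_image]
  constructor
  · rintro ⟨D, hD, d, hd, rfl⟩; exact ⟨hD, hd⟩
  · exact fun h => ⟨p.1, h.1, p.2, h.2, rfl⟩

def markedStars (𝒟 : Finset (Finset ℕ)) (R : Finset FV) : Finset (Finset ℕ × ℕ) :=
  {p ∈ stars 𝒟 | FV.center p.1 p.2 ∈ R}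

def markedVertices (D₁ D₂ D₃ : Finset ℕ) (d₁ d₂ : ℕ) : Finset FV :=
  {.antenna D₁ 0, .antenna D₁ 1, .antenna D₂ 0, .antenna D₂ 1, .antenna D₃ 0, .antenna D₃ 1,
    .center D₁ d₁, .center D₂ d₂}

/-- The second alternative of `FeasibleSet`, with its eight non-leaf vertices listed. -/
structure NonCleanShape (𝒟 : Finset (Finset ℕ)) (R : Finset FV) (D₁ D₂ D₃ : Finset ℕ)
    (d₁ d₂ : ℕ) : Prop where
  mem₁ : D₁ ∈ 𝒟
  mem₂ : D₂ ∈ 𝒟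
  d₁_mem : d₁ ∈ D₁
  d₂_mem : d₂ ∈ D₂
  ne₁₂ : D₁ ≠ D₂
  nonLeaves_eq : nonLeaves R = markedVertices D₁ D₂ D₃ d₁ d₂
  starClean_iff : starClean D₁ d₁ R ↔ starClean D₂ d₂ R
  starClean_of_center_notMem : ∀ D ∈ 𝒟, ∀ d ∈ D, FV.center D d ∉ R → starClean D d R

variable {𝒟 : Finset (Finset ℕ)}

theorem FeasibleSet.card_nonLeaves (hf : FeasibleSet 𝒟 R) : #(nonLeaves R) = 8 := by
  rcases hf with h | h <;> exact h.1

theorem FeasibleSet.exists_nonCleanShape (hf : FeasibleSet 𝒟 R) (hnc : ¬ CleanSet 𝒟 R) :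
    ∃ D₁ D₂ D₃ d₁ d₂, NonCleanShape 𝒟 R D₁ D₂ D₃ d₁ d₂ := by
  obtain hc | ⟨h8, D₁, hD₁, D₂, hD₂, D₃, -, h₁₂, h₁₃, h₂₃, ⟨_, _⟩, ⟨_, _⟩, ⟨_, _⟩, -, -, -, -, -,
    d₁, hd₁, d₂, hd₂, hc₁, hc₂, -, hiff, hclean⟩ := hf
  · exact absurd hc hnc
  refine ⟨D₁, D₂, D₃, d₁, d₂, hD₁, hD₂, hd₁, hd₂, h₁₂, ?_, hiff, hclean⟩
  symm
  refine eq_of_subset_of_card_le (fun x hx => ?_) ?_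
  · simp only [markedVertices, mem_insert, mem_singleton] at hx
    refine mem_filter.2 ⟨?_, by rcases hx with h | h | h | h | h | h | h | h <;> rw [h] <;> rfl⟩
    rcases hx with h | h | h | h | h | h | h | h <;> rw [h] <;> assumption
  · rw [show #(nonLeaves R) = 8 from h8, markedVertices]
    repeat rw [card_insert_of_notMem (by simp <;> grind)]
    rfl

namespace NonCleanShape

variable {D₁ D₂ D₃ X : Finset ℕ} {d₁ d₂ a e : ℕ}

theorem mem_iff_of_isStarLeaf_false (hs : NonCleanShape 𝒟 R D₁ D₂ D₃ d₁ d₂) {x : FV}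
    (hx : x.isStarLeaf = false) : x ∈ R ↔ x ∈ markedVertices D₁ D₂ D₃ d₁ d₂ := by
  rw [← hs.nonLeaves_eq, nonLeaves, mem_filter]
  exact ⟨fun h => ⟨h, hx⟩, And.left⟩

theorem antenna_mem_iff (hs : NonCleanShape 𝒟 R D₁ D₂ D₃ d₁ d₂) :
    FV.antenna X a ∈ R ↔ (X = D₁ ∨ X = D₂ ∨ X = D₃) ∧ (a = 0 ∨ a = 1) := by
  rw [hs.mem_iff_of_isStarLeaf_false rfl]
  simp only [markedVertices, mem_insert, mem_singleton, FV.antenna.injEq, reduceCtorEq, or_false]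
  tauto

theorem center_mem_iff (hs : NonCleanShape 𝒟 R D₁ D₂ D₃ d₁ d₂) :
    FV.center X e ∈ R ↔ (X = D₁ ∧ e = d₁) ∨ (X = D₂ ∧ e = d₂) := by
  rw [hs.mem_iff_of_isStarLeaf_false rfl]
  simp [markedVertices]

theorem treeMarked_iff (hs : NonCleanShape 𝒟 R D₁ D₂ D₃ d₁ d₂) :
    treeMarked X R ↔ X = D₁ ∨ X = D₂ ∨ X = D₃ := by
  simp [treeMarked, hs.antenna_mem_iff]

theorem markedStars_eq (hs : NonCleanShape 𝒟 R D₁ D₂ D₃ d₁ d₂) :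
    markedStars 𝒟 R = {(D₁, d₁), (D₂, d₂)} := by
  ext ⟨X, e⟩
  simp only [markedStars, mem_filter, mem_stars, hs.center_mem_iff, mem_insert, mem_singleton,
    Prod.mk.injEq]
  constructor
  · exact fun h => h.2
  · rintro (⟨rfl, rfl⟩ | ⟨rfl, rfl⟩)
    · exact ⟨⟨hs.mem₁, hs.d₁_mem⟩, Or.inl ⟨rfl, rfl⟩⟩
    · exact ⟨⟨hs.mem₂, hs.d₂_mem⟩, Or.inr ⟨rfl, rfl⟩⟩

end NonCleanShape

theorem CleanSet.starClean (hc : CleanSet 𝒟 R) {X : Finset ℕ} {e : ℕ} (hX : X ∈ 𝒟) (he : e ∈ X) :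
    starClean X e R := by
  rcases hc.2 X hX with h | h
  · exact Or.inl (h e he)
  · exact Or.inr (h e he)

namespace FeasibleSet

variable {p q : Finset ℕ × ℕ}

theorem mem_markedStars_of_not_starClean (hf : FeasibleSet 𝒟 R) (hp : p ∈ stars 𝒟)
    (h : ¬ starClean p.1 p.2 R) : p ∈ markedStars 𝒟 R := by
  rw [mem_stars] at hp
  have hnc : ¬ CleanSet 𝒟 R := fun hc => h (hc.starClean hp.1 hp.2)
  obtain ⟨D₁, D₂, D₃, d₁, d₂, hs⟩ := hf.exists_nonCleanShape hnc
  refine mem_filter.2 ⟨mem_stars.2 hp, ?_⟩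
  by_contra hcen
  exact h (hs.starClean_of_center_notMem _ hp.1 _ hp.2 hcen)

theorem starClean_iff_of_mem_markedStars (hf : FeasibleSet 𝒟 R) (hp : p ∈ markedStars 𝒟 R)
    (hq : q ∈ markedStars 𝒟 R) : starClean p.1 p.2 R ↔ starClean q.1 q.2 R := by
  by_cases hc : CleanSet 𝒟 R
  · have hp' := mem_stars.1 (mem_filter.1 hp).1
    have hq' := mem_stars.1 (mem_filter.1 hq).1
    exact iff_of_true (hc.starClean hp'.1 hp'.2) (hc.starClean hq'.1 hq'.2)
  obtain ⟨D₁, D₂, D₃, d₁, d₂, hs⟩ := hf.exists_nonCleanShape hc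
  rw [hs.markedStars_eq, mem_insert, mem_singleton] at hp hq
  rcases hp with rfl | rfl <;> rcases hq with rfl | rfl
  exacts [Iff.rfl, hs.starClean_iff, hs.starClean_iff.symm, Iff.rfl]

theorem markedStars_eq_pair (hf : FeasibleSet 𝒟 R) (hnc : ¬ CleanSet 𝒟 R)
    (hp : p ∈ markedStars 𝒟 R) (hq : q ∈ markedStars 𝒟 R) (hpq : p ≠ q) :
    markedStars 𝒟 R = {p, q} := by
  obtain ⟨D₁, D₂, D₃, d₁, d₂, hs⟩ := hf.exists_nonCleanShape hnc
  refine (eq_of_subset_of_card_le ?_ ?_).symm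
  · rw [insert_subset_iff, singleton_subset_iff]; exact ⟨hp, hq⟩
  · rw [hs.markedStars_eq, card_pair hpq, card_pair (by simp [hs.ne₁₂])]

theorem treeMarked_of_not_starClean (hf : FeasibleSet 𝒟 R) {X : Finset ℕ} {e : ℕ} (hX : X ∈ 𝒟)
    (he : e ∈ X) (h : ¬ starClean X e R) : ¬ CleanSet 𝒟 R ∧ treeMarked X R := by
  have hnc : ¬ CleanSet 𝒟 R := fun hc => h (hc.starClean hX he)
  obtain ⟨D₁, D₂, D₃, d₁, d₂, hs⟩ := hf.exists_nonCleanShape hnc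
  have hm := hf.mem_markedStars_of_not_starClean (p := (X, e)) (mem_stars.2 ⟨hX, he⟩) h
  rw [hs.markedStars_eq, mem_insert, mem_singleton, Prod.mk.injEq, Prod.mk.injEq] at hm
  rw [hs.treeMarked_iff]
  exact ⟨hnc, by tauto⟩

theorem card_le_three_of_forall_treeMarked (hf : FeasibleSet 𝒟 R) (hnc : ¬ CleanSet 𝒟 R)
    {s : Finset (Finset ℕ)} (h : ∀ X ∈ s, treeMarked X R) : #s ≤ 3 := by
  obtain ⟨D₁, D₂, D₃, d₁, d₂, hs⟩ := hf.exists_nonCleanShape hnc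
  refine (card_le_card (t := {D₁, D₂, D₃}) fun X hX => ?_).trans card_le_three
  simpa only [mem_insert, mem_singleton] using hs.treeMarked_iff.1 (h X hX)

end FeasibleSet

namespace TokenJump

variable {v w : FV}

theorem isStarLeaf_eq (h : TokenJump R R' v w) (hR : FeasibleSet 𝒟 R)
    (hR' : FeasibleSet 𝒟 R') : v.isStarLeaf = w.isStarLeaf := by
  have := h.card_filter_add fun x => x.isStarLeaf = false
  rw [show #{x ∈ R' | x.isStarLeaf = false} = 8 from hR'.card_nonLeaves,
    show #{x ∈ R | x.isStarLeaf = false} = 8 from hR.card_nonLeaves] at this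
  cases hv : v.isStarLeaf <;> cases hw : w.isStarLeaf <;> simp_all

theorem leaf_mem_iff (h : TokenJump R R' v w) (hv : v.isStarLeaf = false)
    (hw : w.isStarLeaf = false) {X : Finset ℕ} {e j : ℕ} :
    FV.leaf X e j ∈ R' ↔ FV.leaf X e j ∈ R :=
  h.mem_iff_of_ne (by rintro rfl; cases hv) (by rintro rfl; cases hw)

theorem cleanSet_iff (h : TokenJump R R' v w) (hR : FeasibleSet 𝒟 R) (hR' : FeasibleSet 𝒟 R')
    (hv : v.isStarLeaf = false) : CleanSet 𝒟 R' ↔ CleanSet 𝒟 R := by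
  have hw : w.isStarLeaf = false := h.isStarLeaf_eq hR hR' ▸ hv
  exact and_congr (iff_of_true hR'.card_nonLeaves hR.card_nonLeaves)
    (forall₂_congr fun D _ => treeClean_congr fun _ _ => h.leaf_mem_iff hv hw)

theorem nonLeaves_eq (h : TokenJump R R' v w) (hv : v.isStarLeaf = true)
    (hw : w.isStarLeaf = true) : nonLeaves R' = nonLeaves R := by
  ext x
  simp only [nonLeaves, mem_filter, and_congr_left_iff]
  intro hx
  exact h.mem_iff_of_ne (by rintro rfl; simp_all) (by rintro rfl; simp_all)

theorem nonLeaves_eq_of_cleanSet_ne (h : TokenJump R R' v w) (hR : FeasibleSet 𝒟 R)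
    (hR' : FeasibleSet 𝒟 R') (hne : ¬ (CleanSet 𝒟 R' ↔ CleanSet 𝒟 R)) :
    nonLeaves R' = nonLeaves R := by
  have hv : v.isStarLeaf = true := by
    by_contra hv
    exact hne (h.cleanSet_iff hR hR' (by simpa using hv))
  exact h.nonLeaves_eq hv (h.isStarLeaf_eq hR hR' ▸ hv)

theorem markedStars_eq (h : TokenJump R R' v w) (hv : v.isStarLeaf = true)
    (hw : w.isStarLeaf = true) : markedStars 𝒟 R' = markedStars 𝒟 R :=
  filter_congr fun _ _ => h.mem_iff_of_ne (by rintro rfl; cases hv) (by rintro rfl; cases hw)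

/-- An antenna of a feasible set that is not clean always comes with its twin, so it cannot
leave alone. -/
theorem src_ne_antenna (h : TokenJump R R' v w) (hR : FeasibleSet 𝒟 R)
    (hR' : FeasibleSet 𝒟 R') (hnc : ¬ CleanSet 𝒟 R) (hnc' : ¬ CleanSet 𝒟 R') (X : Finset ℕ)
    (a : ℕ) : v ≠ FV.antenna X a := by
  rintro rfl
  obtain ⟨D₁, D₂, D₃, d₁, d₂, hs⟩ := hR.exists_nonCleanShape hnc
  obtain ⟨D₁', D₂', D₃', d₁', d₂', hs'⟩ := hR'.exists_nonCleanShape hnc'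
  have ha := hs.antenna_mem_iff.1 h.src_mem
  have htwin : FV.antenna X (1 - a) ∈ R := hs.antenna_mem_iff.2 ⟨ha.1, by omega⟩
  have htwin' : FV.antenna X (1 - a) ∈ R' := by
    refine (h.mem_iff_of_ne ?_ ?_).2 htwin
    · simp only [ne_eq, FV.antenna.injEq, true_and]; omega
    · rintro rfl; exact h.tgt_notMem htwin
  exact h.src_notMem (hs'.antenna_mem_iff.2 ⟨(hs'.antenna_mem_iff.1 htwin').1, ha.2⟩)

theorem antenna_mem_iff (h : TokenJump R R' v w) (hR : FeasibleSet 𝒟 R)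
    (hR' : FeasibleSet 𝒟 R') (hnc : ¬ CleanSet 𝒟 R) (hnc' : ¬ CleanSet 𝒟 R') {X : Finset ℕ}
    {a : ℕ} : FV.antenna X a ∈ R' ↔ FV.antenna X a ∈ R :=
  h.mem_iff_of_ne (h.src_ne_antenna hR hR' hnc hnc' X a).symm
    (h.symm.src_ne_antenna hR' hR hnc' hnc X a).symm

theorem treeMarked_iff (h : TokenJump R R' v w) (hR : FeasibleSet 𝒟 R)
    (hR' : FeasibleSet 𝒟 R') (hnc : ¬ CleanSet 𝒟 R) (hnc' : ¬ CleanSet 𝒟 R') {X : Finset ℕ} :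
    treeMarked X R' ↔ treeMarked X R :=
  and_congr (h.antenna_mem_iff hR hR' hnc hnc') (h.antenna_mem_iff hR hR' hnc hnc')

theorem not_starClean_source {X : Finset ℕ} {e j : ℕ} (h : TokenJump R R' (FV.leaf X e j) w)
    (hj : j < e) (he : 2 ≤ e) : ¬ starClean X e R ∨ ¬ starClean X e R' := by
  rw [or_iff_not_imp_left, not_not]
  intro hc
  have hfull : starFull X e R := hc.resolve_right fun hemp => hemp j hj h.src_mem
  obtain ⟨j', hj', hjj'⟩ : ∃ j' < e, j' ≠ j := ⟨if j = 0 then 1 else 0, by split_ifs <;> omega,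
    by split_ifs <;> omega⟩
  refine not_starClean_of_mem_of_notMem hj' hj ?_ h.src_notMem
  refine (h.mem_iff_of_ne ?_ ?_).2 (hfull j' hj')
  · simpa using hjj'
  · rintro rfl; exact h.tgt_notMem (hfull j' hj')

theorem treeMarked_of_src_eq_leaf {X : Finset ℕ} {e j : ℕ}
    (h : TokenJump R R' (FV.leaf X e j) w) (hR : FeasibleSet 𝒟 R) (hR' : FeasibleSet 𝒟 R')
    (hvR : ∀ x ∈ R, x.valid 𝒟) (h2 : ∀ D ∈ 𝒟, ∀ d ∈ D, 2 ≤ d) :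
    (¬ CleanSet 𝒟 R ∧ treeMarked X R) ∨ (¬ CleanSet 𝒟 R' ∧ treeMarked X R') := by
  obtain ⟨hX, he, hj⟩ := hvR _ h.src_mem
  exact (h.not_starClean_source hj (h2 X hX e he)).imp (hR.treeMarked_of_not_starClean hX he)
    (hR'.treeMarked_of_not_starClean hX he)

theorem treeMarked_of_leaf_moved (h : TokenJump R R' v w) (hR : FeasibleSet 𝒟 R)
    (hR' : FeasibleSet 𝒟 R') (hvR : ∀ x ∈ R, x.valid 𝒟) (hvR' : ∀ x ∈ R', x.valid 𝒟)
    (h2 : ∀ D ∈ 𝒟, ∀ d ∈ D, 2 ≤ d) {X : Finset ℕ} {e j : ℕ}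
    (hmoved : ¬ (FV.leaf X e j ∈ R' ↔ FV.leaf X e j ∈ R)) :
    (¬ CleanSet 𝒟 R ∧ treeMarked X R) ∨ (¬ CleanSet 𝒟 R' ∧ treeMarked X R') := by
  by_cases hv : FV.leaf X e j = v
  · subst hv
    exact h.treeMarked_of_src_eq_leaf hR hR' hvR h2
  by_cases hw : FV.leaf X e j = w
  · subst hw
    exact (h.symm.treeMarked_of_src_eq_leaf hR' hR hvR' h2).symm
  exact absurd (h.mem_iff_of_ne hv hw) hmoved

theorem source_mem_markedStars {X : Finset ℕ} {e j : ℕ}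
    (h : TokenJump R R' (FV.leaf X e j) w) (hR : FeasibleSet 𝒟 R) (hR' : FeasibleSet 𝒟 R')
    (hX : X ∈ 𝒟) (he : e ∈ X) (hj : j < e) (h2e : 2 ≤ e) : (X, e) ∈ markedStars 𝒟 R := by
  have hXe : (X, e) ∈ stars 𝒟 := mem_stars.2 ⟨hX, he⟩
  rcases h.not_starClean_source hj h2e with hc | hc
  · exact hR.mem_markedStars_of_not_starClean hXe hc
  · rw [← h.markedStars_eq rfl (h.isStarLeaf_eq hR hR').symm]
    exact hR'.mem_markedStars_of_not_starClean hXe hc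

end TokenJump

/-! ### A conserved potential -/

def HasUncleanMarkedStar (𝒟 : Finset (Finset ℕ)) (R : Finset FV) : Prop :=
  ∃ p ∈ markedStars 𝒟 R, ¬ starClean p.1 p.2 R

instance (𝒟 : Finset (Finset ℕ)) (R : Finset FV) : Decidable (HasUncleanMarkedStar 𝒟 R) := by
  unfold HasUncleanMarkedStar; infer_instance

def markedLeafCount (𝒟 : Finset (Finset ℕ)) (R : Finset FV) : ℕ :=
  ∑ p ∈ markedStars 𝒟 R, leafCount R p.1 p.2

def fullStarCount (𝒟 : Finset (Finset ℕ)) (s : ℕ) (R : Finset FV) : ℕ :=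
  #{p ∈ stars 𝒟 | p.2 = s ∧ starFull p.1 p.2 R}

def potential (𝒟 : Finset (Finset ℕ)) (s : ℕ) (R : Finset FV) : ℕ :=
  fullStarCount 𝒟 s R + if HasUncleanMarkedStar 𝒟 R ∧ markedLeafCount 𝒟 R = s then 1 else 0

theorem CleanSet.not_hasUncleanMarkedStar (hc : CleanSet 𝒟 R) : ¬ HasUncleanMarkedStar 𝒟 R := by
  rintro ⟨p, hp, hpc⟩
  rw [markedStars, mem_filter, mem_stars] at hp
  exact hpc (hc.starClean hp.1.1 hp.1.2)

namespace FeasibleSet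

variable {p q : Finset ℕ × ℕ}

theorem hasUncleanMarkedStar_iff (hf : FeasibleSet 𝒟 R) (hp : p ∈ markedStars 𝒟 R) :
    HasUncleanMarkedStar 𝒟 R ↔ ¬ starClean p.1 p.2 R :=
  ⟨fun ⟨_, hq, hqc⟩ => by rwa [hf.starClean_iff_of_mem_markedStars hp hq], fun h => ⟨p, hp, h⟩⟩

theorem hasUncleanMarkedStar_and_markedLeafCount_eq_iff (hf : FeasibleSet 𝒟 R)
    (hp : p ∈ markedStars 𝒟 R) (hq : q ∈ markedStars 𝒟 R) (hpq : p ≠ q) (s : ℕ) :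
    HasUncleanMarkedStar 𝒟 R ∧ markedLeafCount 𝒟 R = s ↔
      ¬ starClean p.1 p.2 R ∧ leafCount R p.1 p.2 + leafCount R q.1 q.2 = s := by
  rw [hf.hasUncleanMarkedStar_iff hp, and_congr_right_iff]
  intro hc
  have hnc : ¬ CleanSet 𝒟 R := fun hcl => hcl.not_hasUncleanMarkedStar ⟨p, hp, hc⟩
  rw [markedLeafCount, hf.markedStars_eq_pair hnc hp hq hpq, sum_pair hpq]

end FeasibleSet

theorem potential_congr (hm : markedStars 𝒟 R' = markedStars 𝒟 R)
    (hc : ∀ X e, leafCount R' X e = leafCount R X e) (s : ℕ) :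
    potential 𝒟 s R' = potential 𝒟 s R := by
  have hfull : fullStarCount 𝒟 s R' = fullStarCount 𝒟 s R := by
    simp only [fullStarCount, ← leafCount_eq_iff_starFull, hc]
  have hbad : HasUncleanMarkedStar 𝒟 R' ↔ HasUncleanMarkedStar 𝒟 R := by
    simp only [HasUncleanMarkedStar, starClean_iff_leafCount, hc, hm]
  have hmlc : markedLeafCount 𝒟 R' = markedLeafCount 𝒟 R := by
    simp only [markedLeafCount, hc, hm]
  simp only [potential, hfull, hbad, hmlc]

namespace TokenJump

variable {v w : FV}

theorem exists_center_eq (h : TokenJump R R' v w) (hR : FeasibleSet 𝒟 R)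
    (hR' : FeasibleSet 𝒟 R') (hnc : ¬ CleanSet 𝒟 R) (hnc' : ¬ CleanSet 𝒟 R')
    (hv : v.isStarLeaf = false) : ∃ p ∈ markedStars 𝒟 R, v = FV.center p.1 p.2 := by
  obtain ⟨D₁, D₂, D₃, d₁, d₂, hs⟩ := hR.exists_nonCleanShape hnc
  have hvm := (hs.mem_iff_of_isStarLeaf_false hv).1 h.src_mem
  have hant : ∀ X a, v ≠ FV.antenna X a := by
    rintro X a rfl
    exact h.src_notMem ((h.antenna_mem_iff hR hR' hnc hnc').2 h.src_mem)
  simp only [markedVertices, mem_insert, mem_singleton] at hvm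
  rw [hs.markedStars_eq]
  rcases hvm with h' | h' | h' | h' | h' | h' | h' | h'
  iterate 6 exact absurd h' (hant _ _)
  · exact ⟨_, mem_insert_self _ _, h'⟩
  · exact ⟨_, mem_insert_of_mem (mem_singleton_self _), h'⟩

/-- A token leaving the center of a marked star leaves that star unmarked, hence clean;
as no leaf moves, the star was already clean. -/
theorem not_hasUncleanMarkedStar_of_isStarLeaf_false (h : TokenJump R R' v w)
    (hR : FeasibleSet 𝒟 R) (hR' : FeasibleSet 𝒟 R') (hnc : ¬ CleanSet 𝒟 R) (hnc' : ¬ CleanSet 𝒟 R')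
    (hv : v.isStarLeaf = false) : ¬ HasUncleanMarkedStar 𝒟 R := by
  obtain ⟨p, hp, rfl⟩ := h.exists_center_eq hR hR' hnc hnc' hv
  have hw : w.isStarLeaf = false := h.isStarLeaf_eq hR hR' ▸ hv
  rw [hR.hasUncleanMarkedStar_iff hp, not_not]
  have hc' : starClean p.1 p.2 R' := by
    by_contra hc'
    exact h.src_notMem (mem_filter.1 (hR'.mem_markedStars_of_not_starClean
      (mem_filter.1 hp).1 hc')).2
  rwa [starClean_congr fun _ => h.leaf_mem_iff hv hw] at hc'

theorem potential_eq_of_isStarLeaf_false (h : TokenJump R R' v w) (hR : FeasibleSet 𝒟 R)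
    (hR' : FeasibleSet 𝒟 R') (hv : v.isStarLeaf = false) (s : ℕ) :
    potential 𝒟 s R' = potential 𝒟 s R := by
  have hw : w.isStarLeaf = false := h.isStarLeaf_eq hR hR' ▸ hv
  have hfull : fullStarCount 𝒟 s R' = fullStarCount 𝒟 s R := by
    simp only [fullStarCount, starFull_congr fun _ => h.leaf_mem_iff hv hw]
  have hbad : ¬ HasUncleanMarkedStar 𝒟 R ∧ ¬ HasUncleanMarkedStar 𝒟 R' := by
    by_cases hc : CleanSet 𝒟 R
    · exact ⟨hc.not_hasUncleanMarkedStar,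
        ((h.cleanSet_iff hR hR' hv).2 hc).not_hasUncleanMarkedStar⟩
    have hc' : ¬ CleanSet 𝒟 R' := mt (h.cleanSet_iff hR hR' hv).1 hc
    exact ⟨h.not_hasUncleanMarkedStar_of_isStarLeaf_false hR hR' hc hc' hv,
      h.symm.not_hasUncleanMarkedStar_of_isStarLeaf_false hR' hR hc' hc hw⟩
  simp only [potential, hfull, hbad.1, hbad.2, false_and, if_false]

theorem potential_eq_of_same_star {X : Finset ℕ} {e j₁ j₂ : ℕ}
    (h : TokenJump R R' (FV.leaf X e j₁) (FV.leaf X e j₂)) (hj₁ : j₁ < e) (hj₂ : j₂ < e)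
    (s : ℕ) : potential 𝒟 s R' = potential 𝒟 s R := by
  refine potential_congr (h.markedStars_eq rfl rfl) (fun Y d => ?_) s
  have hcond : X = Y ∧ e = d ∧ j₁ < d ↔ X = Y ∧ e = d ∧ j₂ < d := by
    constructor <;> rintro ⟨rfl, rfl, -⟩ <;> exact ⟨rfl, rfl, by assumption⟩
  have := h.leafCount_add Y d
  simp only [leaf_mem_starLeaves, hcond] at this
  exact Nat.add_right_cancel this

variable {X₁ X₂ : Finset ℕ} {e₁ e₂ j₁ j₂ : ℕ}

theorem leafCount_src_add_one (h : TokenJump R R' (FV.leaf X₁ e₁ j₁) (FV.leaf X₂ e₂ j₂))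
    (hne : (X₁, e₁) ≠ (X₂, e₂)) (hj₁ : j₁ < e₁) : leafCount R' X₁ e₁ + 1 = leafCount R X₁ e₁ := by
  have := h.leafCount_add X₁ e₁
  rwa [if_pos (leaf_mem_starLeaves.2 ⟨rfl, rfl, hj₁⟩), if_neg fun h' => hne ?_, add_zero] at this
  rw [leaf_mem_starLeaves] at h'
  rw [h'.1, h'.2.1]

theorem fullStarCount_add (h : TokenJump R R' (FV.leaf X₁ e₁ j₁) (FV.leaf X₂ e₂ j₂))
    (hP : (X₁, e₁) ∈ stars 𝒟) (hQ : (X₂, e₂) ∈ stars 𝒟) (hne : (X₁, e₁) ≠ (X₂, e₂))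
    (hj₁ : j₁ < e₁) (hj₂ : j₂ < e₂) (s : ℕ) :
    fullStarCount 𝒟 s R' + (if e₁ = s ∧ starFull X₁ e₁ R then 1 else 0) =
      fullStarCount 𝒟 s R + (if e₂ = s ∧ starFull X₂ e₂ R' then 1 else 0) := by
  have key := sum_add_eq_sum_add_of_eqOn_compl_pair hP hQ hne
    (f := fun p => if p.2 = s ∧ starFull p.1 p.2 R' then 1 else 0)
    (g := fun p => if p.2 = s ∧ starFull p.1 p.2 R then 1 else 0) fun p _ hp hq => by
      have : starFull p.1 p.2 R' ↔ starFull p.1 p.2 R := by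
        refine starFull_congr fun j => h.mem_iff_of_ne ?_ ?_
        · rintro ⟨⟩; exact hp rfl
        · rintro ⟨⟩; exact hq rfl
      simp only [this]
  have hP' : ¬ starFull X₁ e₁ R' := fun hf => h.src_notMem (hf j₁ hj₁)
  have hQ' : ¬ starFull X₂ e₂ R := fun hf => h.tgt_notMem (hf j₂ hj₂)
  simp only [hP', hQ', and_false, if_false, add_zero, zero_add] at key
  rw [fullStarCount, fullStarCount, card_filter, card_filter]
  exact key

/-- Let `a`, `b` be the token counts of the source and target stars in `R`. Both stars are clean
in `R` exactly when `a = e₁` and `b = 0`, and both are clean in `R'` exactly when `a = 1` and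
`b + 1 = e₂`; in each of the four cases the change of `fullStarCount` is offset by the change of
the extra term. -/
theorem potential_eq_of_ne_star (h2 : ∀ D ∈ 𝒟, ∀ d ∈ D, 2 ≤ d)
    (h : TokenJump R R' (FV.leaf X₁ e₁ j₁) (FV.leaf X₂ e₂ j₂)) (hR : FeasibleSet 𝒟 R)
    (hR' : FeasibleSet 𝒟 R') (hvR : ∀ x ∈ R, x.valid 𝒟) (hvR' : ∀ x ∈ R', x.valid 𝒟)
    (hne : (X₁, e₁) ≠ (X₂, e₂)) (s : ℕ) : potential 𝒟 s R' = potential 𝒟 s R := by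
  obtain ⟨hX₁, he₁, hj₁⟩ := hvR _ h.src_mem
  obtain ⟨hX₂, he₂, hj₂⟩ := hvR' _ h.tgt_mem
  have hm := h.markedStars_eq (𝒟 := 𝒟) rfl rfl
  have hP := h.source_mem_markedStars hR hR' hX₁ he₁ hj₁ (h2 _ hX₁ _ he₁)
  have hQ' := h.symm.source_mem_markedStars hR' hR hX₂ he₂ hj₂ (h2 _ hX₂ _ he₂)
  have hQ : (X₂, e₂) ∈ markedStars 𝒟 R := hm ▸ hQ'
  have hP' : (X₁, e₁) ∈ markedStars 𝒟 R' := hm ▸ hP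
  have hfull := h.fullStarCount_add (mem_filter.1 hP).1 (mem_filter.1 hQ).1 hne hj₁ hj₂ s
  have hcP := h.leafCount_src_add_one hne hj₁
  have hcQ := h.symm.leafCount_src_add_one hne.symm hj₂
  have hpair := hR.starClean_iff_of_mem_markedStars hP hQ
  have hpair' := hR'.starClean_iff_of_mem_markedStars hQ' hP'
  simp only [potential, hR.hasUncleanMarkedStar_and_markedLeafCount_eq_iff hP hQ hne s,
    hR'.hasUncleanMarkedStar_and_markedLeafCount_eq_iff hQ' hP' hne.symm s,
    starClean_iff_leafCount, ← leafCount_eq_iff_starFull] at hfull hpair hpair' ⊢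
  have := @leafCount_le R X₁ e₁
  have := @leafCount_le R' X₂ e₂
  have := h2 _ hX₁ _ he₁
  split_ifs at hfull ⊢ <;> omega

theorem potential_eq (h2 : ∀ D ∈ 𝒟, ∀ d ∈ D, 2 ≤ d) (h : TokenJump R R' v w)
    (hR : FeasibleSet 𝒟 R) (hR' : FeasibleSet 𝒟 R') (hvR : ∀ x ∈ R, x.valid 𝒟)
    (hvR' : ∀ x ∈ R', x.valid 𝒟) (s : ℕ) : potential 𝒟 s R' = potential 𝒟 s R := by
  cases hv : v.isStarLeaf
  · exact h.potential_eq_of_isStarLeaf_false hR hR' hv s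
  obtain ⟨X₁, e₁, j₁, rfl⟩ := FV.exists_eq_leaf hv
  obtain ⟨X₂, e₂, j₂, rfl⟩ := FV.exists_eq_leaf (h.isStarLeaf_eq hR hR' ▸ hv)
  by_cases hne : (X₁, e₁) = (X₂, e₂)
  · obtain ⟨rfl, rfl⟩ := Prod.mk.inj hne
    exact h.potential_eq_of_same_star (hvR _ h.src_mem).2.2 (hvR' _ h.tgt_mem).2.2 s
  · exact h.potential_eq_of_ne_star h2 hR hR' hvR hvR' hne s

end TokenJump

theorem potential_of_cleanSet (hc : CleanSet 𝒟 R) (hpos : ∀ D ∈ 𝒟, ∀ d ∈ D, 0 < d) (s : ℕ) :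
    potential 𝒟 s R = #({D ∈ 𝒟 | treeFull D R}.filter (s ∈ ·)) := by
  rw [potential, if_neg fun h => hc.not_hasUncleanMarkedStar h.1, add_zero, fullStarCount]
  refine card_nbij' Prod.fst (·, s) (fun p hp => ?_) (fun D hD => ?_) (fun p hp => ?_)
    (fun D _ => rfl)
  · simp only [mem_coe, mem_filter, mem_stars] at hp ⊢
    obtain ⟨⟨hD, hd⟩, rfl, hfull⟩ := hp
    refine ⟨⟨hD, (hc.2 _ hD).resolve_right fun hemp => ?_⟩, hd⟩
    exact hemp _ hd 0 (hpos _ hD _ hd) (hfull 0 (hpos _ hD _ hd))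
  · simp only [mem_coe, mem_filter, mem_stars] at hD ⊢
    exact ⟨⟨hD.1.1, hD.2⟩, trivial, hD.1.2 s hD.2⟩
  · simp only [mem_coe, mem_filter] at hp
    exact Prod.ext rfl hp.2.1.symm

/-! ### TJ-sequences and phases -/

theorem CleanSet.of_tokenJump {v w : FV} (hR : CleanSet 𝒟 R) (h : TokenJump R R' v w)
    (hv : v.isStarLeaf = false) (hw : w.isStarLeaf = false) : CleanSet 𝒟 R' := by
  refine ⟨?_, fun D hD => (treeClean_congr fun _ _ => h.leaf_mem_iff hv hw).2 (hR.2 D hD)⟩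
  have := h.card_filter_add fun x => x.isStarLeaf = false
  simp only [hv, hw, if_true] at this
  have h8 : #{x ∈ R | x.isStarLeaf = false} = 8 := hR.1
  omega

theorem card_eq_of_leaf_mem_iff (hleaf : ∀ x : FV, x.isStarLeaf = true → (x ∈ R ↔ x ∈ R'))
    (hN : #(nonLeaves R) = #(nonLeaves R')) : #R = #R' := by
  have hL : {x ∈ R | x.isStarLeaf = true} = {x ∈ R' | x.isStarLeaf = true} := by
    ext x
    simp only [mem_filter]
    exact and_congr_left (hleaf x)
  simp only [nonLeaves] at hN
  rw [← card_filter_add_card_filter_not (s := R) (fun x => x.isStarLeaf = true),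
    ← card_filter_add_card_filter_not (s := R') (fun x => x.isStarLeaf = true), hL]
  simpa only [Bool.not_eq_true] using congrArg (_ + ·) hN

theorem CleanSet.leaf_mem_iff (hc : CleanSet 𝒟 R) (hvR : ∀ x ∈ R, x.valid 𝒟) {X : Finset ℕ}
    {e j : ℕ} : FV.leaf X e j ∈ R ↔ (X ∈ 𝒟 ∧ treeFull X R) ∧ e ∈ X ∧ j < e := by
  constructor
  · intro hx
    obtain ⟨hX, he, hj⟩ := hvR _ hx
    exact ⟨⟨hX, (hc.2 X hX).resolve_right fun hemp => hemp e he j hj hx⟩, he, hj⟩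
  · rintro ⟨⟨-, hfull⟩, he, hj⟩
    exact hfull e he j hj

theorem nonLeaves_sdiff_subset : nonLeaves R \ nonLeaves R' ⊆ R \ R' := by
  intro x hx
  simp only [nonLeaves, mem_sdiff, mem_filter, not_and] at hx ⊢
  exact ⟨hx.1.1, fun h => hx.2 h hx.1.2⟩

theorem isStarLeaf_eq_false_of_mem_sdiff
    (hleaf : ∀ x : FV, x.isStarLeaf = true → (x ∈ R ↔ x ∈ R')) {x : FV} (hx : x ∈ R \ R') :
    x.isStarLeaf = false := by
  rw [mem_sdiff] at hx
  by_contra hxl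
  exact hx.2 ((hleaf x (by simpa using hxl)).1 hx.1)

theorem sdiff_eq_nonLeaves_sdiff (hleaf : ∀ x : FV, x.isStarLeaf = true → (x ∈ R ↔ x ∈ R')) :
    R \ R' = nonLeaves R \ nonLeaves R' := by
  refine Subset.antisymm (fun x hx => ?_) nonLeaves_sdiff_subset
  have hxl := isStarLeaf_eq_false_of_mem_sdiff hleaf hx
  rw [mem_sdiff] at hx
  simp only [nonLeaves, mem_sdiff, mem_filter]
  exact ⟨⟨hx.1, hxl⟩, fun h' => hx.2 h'.1⟩

namespace TJFeasSeq

variable {seq : ℕ → Finset FV} {ℓ : ℕ} {S S' : Finset FV} {i i' : ℕ}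

theorem valid (h : TJFeasSeq 𝒟 seq ℓ S S') {j : ℕ} (hj : j ≤ ℓ) : ∀ x ∈ seq j, x.valid 𝒟 :=
  (h.2.2.1 j hj).1

theorem feasible (h : TJFeasSeq 𝒟 seq ℓ S S') {j : ℕ} (hj : j ≤ ℓ) : FeasibleSet 𝒟 (seq j) :=
  (h.2.2.1 j hj).2

theorem exists_tokenJump (h : TJFeasSeq 𝒟 seq ℓ S S') {j : ℕ} (hj : j < ℓ) :
    ∃ v w, TokenJump (seq j) (seq (j + 1)) v w :=
  TokenJump.exists_of_card_sdiff (h.2.2.2 j hj).1 (h.2.2.2 j hj).2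

theorem potential_eq (h : TJFeasSeq 𝒟 seq ℓ S S') (h2 : ∀ D ∈ 𝒟, ∀ d ∈ D, 2 ≤ d) {j : ℕ}
    (hj : j ≤ ℓ) (s : ℕ) : potential 𝒟 s (seq j) = potential 𝒟 s (seq 0) := by
  induction j with
  | zero => rfl
  | succ j ih =>
    obtain ⟨v, w, hjump⟩ := h.exists_tokenJump hj
    rw [hjump.potential_eq h2 (h.feasible (by omega)) (h.feasible hj) (h.valid (by omega))
      (h.valid hj), ih (by omega)]

theorem take (h : TJFeasSeq 𝒟 seq ℓ S S') {m : ℕ} (hm : m ≤ ℓ) : TJFeasSeq 𝒟 seq m S (seq m) :=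
  ⟨h.1, rfl, fun k hk => h.2.2.1 k (by omega), fun k hk => h.2.2.2 k (by omega)⟩

theorem drop (h : TJFeasSeq 𝒟 seq ℓ S S') {m : ℕ} (hm : m ≤ ℓ) :
    TJFeasSeq 𝒟 (fun k => seq (m + k)) (ℓ - m) (seq m) S' :=
  ⟨rfl, by dsimp only; rw [Nat.add_sub_cancel' hm, h.2.1], fun k hk => h.2.2.1 (m + k) (by omega),
    fun k hk => h.2.2.2 (m + k) (by omega)⟩

theorem append {f g : ℕ → Finset FV} {a b : ℕ} {S T U : Finset FV} (hf : TJFeasSeq 𝒟 f a S T)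
    (hg : TJFeasSeq 𝒟 g b T U) :
    TJFeasSeq 𝒟 (fun k => if k ≤ a then f k else g (k - a)) (a + b) S U := by
  obtain ⟨hf0, hfa, hff, hfs⟩ := hf
  obtain ⟨hg0, hgb, hgf, hgs⟩ := hg
  refine ⟨by simp [hf0], ?_, fun k hk => ?_, fun k hk => ?_⟩
  · dsimp only
    split_ifs with h
    · obtain rfl : b = 0 := by omega
      rw [Nat.add_zero, hfa, ← hg0, hgb]
    · rw [Nat.add_sub_cancel_left, hgb]
  · dsimp only
    split_ifs with h
    exacts [hff k h, hgf (k - a) (by omega)]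
  · dsimp only
    split_ifs with h₁ h₂ h₂
    · exact hfs k (by omega)
    · obtain rfl : k = a := by omega
      rw [hfa, ← hg0, show k + 1 - k = 0 + 1 by omega]
      exact hgs 0 (by omega)
    · omega
    · rw [show k + 1 - a = k - a + 1 by omega]
      exact hgs (k - a) (by omega)

theorem of_tokenJump {R R' : Finset FV} {v w : FV} (h : TokenJump R R' v w)
    (hvR : ∀ x ∈ R, x.valid 𝒟) (hvR' : ∀ x ∈ R', x.valid 𝒟) (hR : FeasibleSet 𝒟 R)
    (hR' : FeasibleSet 𝒟 R') : TJFeasSeq 𝒟 (fun k => if k = 0 then R else R') 1 R R' := by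
  refine ⟨rfl, rfl, fun k hk => ?_, fun k hk => ?_⟩
  · dsimp only
    split_ifs
    exacts [⟨hvR, hR⟩, ⟨hvR', hR'⟩]
  · obtain rfl : k = 0 := by omega
    exact h.card_sdiff

theorem exists_of_cleanSet {R R' : Finset FV} (hR : CleanSet 𝒟 R)
    (hR' : CleanSet 𝒟 R') (hvR : ∀ x ∈ R, x.valid 𝒟) (hvR' : ∀ x ∈ R', x.valid 𝒟)
    (hleaf : ∀ x : FV, x.isStarLeaf = true → (x ∈ R ↔ x ∈ R')) :
    ∃ seq, TJFeasSeq 𝒟 seq #(R \ R') R R' := by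
  have hcard : #(R \ R') = #(R' \ R) :=
    card_sdiff_comm (card_eq_of_leaf_mem_iff hleaf (hR.1.trans hR'.1.symm))
  induction hn : #(R \ R') generalizing R with
  | zero =>
    have hRR' : R = R' := Subset.antisymm (sdiff_eq_empty_iff_subset.1 (card_eq_zero.1 hn))
      (sdiff_eq_empty_iff_subset.1 (card_eq_zero.1 (hcard ▸ hn)))
    subst hRR'
    exact ⟨fun _ => R, rfl, rfl, fun _ _ => ⟨hvR, Or.inl hR⟩, fun _ h => absurd h (by omega)⟩
  | succ n ih =>
    obtain ⟨v, hv⟩ : (R \ R').Nonempty := card_pos.1 (by omega)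
    obtain ⟨w, hw⟩ : (R' \ R).Nonempty := card_pos.1 (by omega)
    have hvl := isStarLeaf_eq_false_of_mem_sdiff hleaf hv
    have hwl := isStarLeaf_eq_false_of_mem_sdiff (fun x hx => (hleaf x hx).symm) hw
    rw [mem_sdiff] at hv hw
    have hjump : TokenJump R (insert w (R.erase v)) v w := ⟨hv.1, hw.2, rfl⟩
    have hR₁ := hR.of_tokenJump hjump hvl hwl
    have hvR₁ : ∀ x ∈ insert w (R.erase v), x.valid 𝒟 := by
      intro x hx
      rcases hjump.mem_iff.1 hx with rfl | ⟨-, hx⟩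
      exacts [hvR' _ hw.1, hvR _ hx]
    have hleaf₁ : ∀ x : FV, x.isStarLeaf = true → (x ∈ insert w (R.erase v) ↔ x ∈ R') :=
      fun x hx => (hjump.mem_iff_of_ne (by rintro rfl; simp_all) (by rintro rfl; simp_all)).trans
        (hleaf x hx)
    have hn₁ : #(insert w (R.erase v) \ R') = n := by
      have : insert w (R.erase v) \ R' = (R \ R').erase v := by
        ext x; simp only [mem_sdiff, mem_insert, mem_erase]; grind
      rw [this, card_erase_of_mem (mem_sdiff.2 hv), hn, Nat.add_sub_cancel]
    obtain ⟨seq, hseq⟩ := ih hR₁ hvR₁ hleaf₁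
      (card_sdiff_comm (card_eq_of_leaf_mem_iff hleaf₁ (hR₁.1.trans hR'.1.symm))) hn₁
    exact ⟨_, add_comm 1 n ▸ (TJFeasSeq.of_tokenJump hjump hvR hvR₁ (Or.inl hR)
      (Or.inl hR₁)).append hseq⟩

theorem card_nonLeaves_sdiff_le (h : TJFeasSeq 𝒟 seq ℓ S S') {a b : ℕ} (hab : a ≤ b)
    (hb : b ≤ ℓ) : #(nonLeaves (seq a) \ nonLeaves (seq b)) ≤ b - a := by
  have := card_sdiff_le_of_card_sdiff_succ_le_one (fun k => nonLeaves (seq (a + k))) (b - a)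
    fun k hk => (card_le_card nonLeaves_sdiff_subset).trans (h.2.2.2 (a + k) (by omega)).1.le
  simpa only [Nat.add_zero, Nat.add_sub_cancel' hab] using this

theorem treeMarked_iff_of_not_cleanSet (h : TJFeasSeq 𝒟 seq ℓ S S') (hi' : i' ≤ ℓ)
    (hnc : ∀ j, i < j → j < i' → ¬ CleanSet 𝒟 (seq j)) {j : ℕ} (hij : i < j) (hji' : j < i')
    {X : Finset ℕ} : treeMarked X (seq j) ↔ treeMarked X (seq (i + 1)) := by
  induction j, (hij : i + 1 ≤ j) using Nat.le_induction with
  | base => rfl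
  | succ j hj ih =>
    obtain ⟨v, w, hjump⟩ := h.exists_tokenJump (j := j) (by omega)
    rw [hjump.treeMarked_iff (h.feasible (by omega)) (h.feasible (by omega))
      (hnc j (by omega) (by omega)) (hnc (j + 1) (by omega) hji'), ih (by omega)]

theorem treeFull_iff_of_not_treeMarked (h : TJFeasSeq 𝒟 seq ℓ S S')
    (h2 : ∀ D ∈ 𝒟, ∀ d ∈ D, 2 ≤ d) (hii' : i ≤ i') (hi' : i' ≤ ℓ) (hci : CleanSet 𝒟 (seq i))
    (hci' : CleanSet 𝒟 (seq i')) (hnc : ∀ j, i < j → j < i' → ¬ CleanSet 𝒟 (seq j))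
    {X : Finset ℕ} (hX : ¬ treeMarked X (seq (i + 1))) :
    treeFull X (seq i') ↔ treeFull X (seq i) := by
  refine treeFull_congr fun e j => ?_
  suffices ∀ n, i ≤ n → n ≤ i' → (FV.leaf X e j ∈ seq n ↔ FV.leaf X e j ∈ seq i) from
    this i' hii' le_rfl
  intro n hin
  induction n, hin using Nat.le_induction with
  | base => exact fun _ => Iff.rfl
  | succ n hn ih =>
    intro hn'
    obtain ⟨v, w, hjump⟩ := h.exists_tokenJump (j := n) (by omega)
    rw [← ih (by omega)]
    by_contra hmoved
    rcases hjump.treeMarked_of_leaf_moved (h.feasible (by omega)) (h.feasible (by omega))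
      (h.valid (by omega)) (h.valid (by omega)) h2 hmoved with ⟨hnc', hm⟩ | ⟨hnc', hm⟩
    · have hin : i < n := lt_of_le_of_ne hn fun h' => hnc' (h' ▸ hci)
      exact hX ((h.treeMarked_iff_of_not_cleanSet hi' hnc hin (by omega)).1 hm)
    · have hni' : n + 1 < i' := lt_of_le_of_ne hn' fun h' => hnc' (h' ▸ hci')
      exact hX ((h.treeMarked_iff_of_not_cleanSet hi' hnc (by omega) hni').1 hm)

theorem filter_treeFull_ne (h : TJFeasSeq 𝒟 seq ℓ S S')
    (hmin : ∀ (seq' : ℕ → Finset FV) (ℓ' : ℕ), TJFeasSeq 𝒟 seq' ℓ' S S' → ℓ ≤ ℓ')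
    (hi' : i' ≤ ℓ) (hlt : i + 1 < i') (hci : CleanSet 𝒟 (seq i)) (hci' : CleanSet 𝒟 (seq i'))
    (hnc : ∀ j, i < j → j < i' → ¬ CleanSet 𝒟 (seq j)) :
    {D ∈ 𝒟 | treeFull D (seq i)} ≠ {D ∈ 𝒟 | treeFull D (seq i')} := by
  intro hfull
  have hleaf : ∀ x : FV, x.isStarLeaf = true → (x ∈ seq i ↔ x ∈ seq i') := by
    intro x hx
    obtain ⟨X, e, j, rfl⟩ := FV.exists_eq_leaf hx
    have hX := Finset.ext_iff.1 hfull X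
    simp only [mem_filter] at hX
    rw [hci.leaf_mem_iff (h.valid (by omega)), hci'.leaf_mem_iff (h.valid hi'), hX]
  obtain ⟨v, w, hfirst⟩ := h.exists_tokenJump (j := i) (by omega)
  obtain ⟨v', w', hlast⟩ := h.exists_tokenJump (j := i' - 1) (by omega)
  rw [Nat.sub_add_cancel (by omega)] at hlast
  have hN := hfirst.nonLeaves_eq_of_cleanSet_ne (h.feasible (by omega)) (h.feasible (by omega))
    (by simp only [hci, hnc (i + 1) (by omega) (by omega), iff_true, not_false_eq_true])
  have hN' := hlast.nonLeaves_eq_of_cleanSet_ne (h.feasible (by omega)) (h.feasible hi')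
    (by simp only [hci', hnc (i' - 1) (by omega) (by omega), true_iff, not_false_eq_true])
  have hshort : #(seq i \ seq i') ≤ i' - 1 - (i + 1) := by
    calc #(seq i \ seq i') = #(nonLeaves (seq (i + 1)) \ nonLeaves (seq (i' - 1))) := by
          rw [sdiff_eq_nonLeaves_sdiff hleaf, hN, hN']
      _ ≤ i' - 1 - (i + 1) := h.card_nonLeaves_sdiff_le (by omega) (by omega)
  obtain ⟨mid, hmid⟩ := exists_of_cleanSet hci hci' (h.valid (by omega)) (h.valid hi') hleaf
  have := hmin _ _ (((h.take (by omega)).append hmid).append (h.drop hi'))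
  omega

end TJFeasSeq

/-! ### Split or merge -/

section SplitOrMerge

variable {𝒮 𝒮' : Finset (Finset ℕ)}

theorem card_filter_mem_sdiff_eq {s : ℕ} (h : #{X ∈ 𝒮 | s ∈ X} = #{X ∈ 𝒮' | s ∈ X}) :
    #{X ∈ 𝒮 \ 𝒮' | s ∈ X} = #{X ∈ 𝒮' \ 𝒮 | s ∈ X} := by
  have key : ∀ A B : Finset (Finset ℕ),
      #{X ∈ A | s ∈ X} = #{X ∈ A \ B | s ∈ X} + #{X ∈ A ∩ B | s ∈ X} := fun A B => by
    rw [← card_union_of_disjoint (disjoint_filter_filter (disjoint_sdiff_inter A B)),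
      ← filter_union, sdiff_union_inter]
  have h₁ := key 𝒮 𝒮'
  have h₂ := key 𝒮' 𝒮
  rw [inter_comm] at h₂
  omega

theorem nonempty_of_card_filter_mem_eq (h : ∀ s, #{X ∈ 𝒮 | s ∈ X} = #{X ∈ 𝒮' | s ∈ X})
    (hne : ∀ X ∈ 𝒮', X.Nonempty) (h𝒮' : 𝒮'.Nonempty) : 𝒮.Nonempty := by
  obtain ⟨X, hX⟩ := h𝒮'
  obtain ⟨s, hs⟩ := hne X hX
  have : 0 < #{X ∈ 𝒮 | s ∈ X} := h s ▸ card_pos.2 ⟨X, mem_filter.2 ⟨hX, hs⟩⟩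
  obtain ⟨Y, hY⟩ := card_pos.1 this
  exact ⟨Y, (mem_filter.1 hY).1⟩

theorem splitOrMerge_of_card_filter_mem_eq (hne : 𝒮 ≠ 𝒮')
    (hnonempty : ∀ X ∈ 𝒮 ∪ 𝒮', X.Nonempty) (hcard : #(𝒮 \ 𝒮') + #(𝒮' \ 𝒮) ≤ 3)
    (hcount : ∀ s, #{X ∈ 𝒮 | s ∈ X} = #{X ∈ 𝒮' | s ∈ X}) : SplitOrMerge 𝒮 𝒮' := by
  have hc := fun s => card_filter_mem_sdiff_eq (hcount s)
  have hL : (𝒮 \ 𝒮').Nonempty ∨ (𝒮' \ 𝒮).Nonempty := by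
    by_contra! h
    exact hne (Subset.antisymm (sdiff_eq_empty_iff_subset.1 h.1)
      (sdiff_eq_empty_iff_subset.1 h.2))
  have hmem : ∀ X ∈ 𝒮 \ 𝒮' ∪ 𝒮' \ 𝒮, X.Nonempty := fun X hX =>
    hnonempty X (union_subset_union sdiff_subset sdiff_subset hX)
  have hL' : (𝒮 \ 𝒮').Nonempty ∧ (𝒮' \ 𝒮).Nonempty := by
    rcases hL with hL | hG
    · exact ⟨hL, nonempty_of_card_filter_mem_eq (fun s => (hc s).symm)
        (fun X hX => hmem X (mem_union_left _ hX)) hL⟩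
    · exact ⟨nonempty_of_card_filter_mem_eq hc (fun X hX => hmem X (mem_union_right _ hX)) hG,
        hG⟩
  have h1 := card_pos.2 hL'.1
  have h2 := card_pos.2 hL'.2
  rcases (by omega : (#(𝒮 \ 𝒮') = 1 ∧ #(𝒮' \ 𝒮) = 1) ∨ (#(𝒮 \ 𝒮') = 1 ∧ #(𝒮' \ 𝒮) = 2) ∨
    (#(𝒮 \ 𝒮') = 2 ∧ #(𝒮' \ 𝒮) = 1)) with ⟨hl, hg⟩ | ⟨hl, hg⟩ | ⟨hl, hg⟩
  · obtain ⟨X, hX⟩ := card_eq_one.1 hl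
    obtain ⟨Y, hY⟩ := card_eq_one.1 hg
    have hXY : X = Y := by
      ext s
      have := hc s
      rw [hX, hY, filter_singleton, filter_singleton] at this
      split_ifs at this <;> simp_all
    have hX𝒮 : X ∈ 𝒮 \ 𝒮' := hX ▸ mem_singleton_self X
    have hY𝒮 : Y ∈ 𝒮' \ 𝒮 := hY ▸ mem_singleton_self Y
    exact absurd (mem_sdiff.1 hY𝒮).1 (hXY ▸ (mem_sdiff.1 hX𝒮).2)
  · obtain ⟨X, hX⟩ := card_eq_one.1 hl
    obtain ⟨Y, Z, hYZ, hG⟩ := card_eq_two.1 hg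
    exact Or.inl ⟨X, Y, Z, hYZ, hX, hG⟩
  · obtain ⟨X, hX⟩ := card_eq_one.1 hg
    obtain ⟨Y, Z, hYZ, hG⟩ := card_eq_two.1 hl
    exact Or.inr ⟨X, Y, Z, hYZ, hX, hG⟩

end SplitOrMerge

theorem stmt13_general (U : Finset ℕ) (hU : ∀ u ∈ U, 3 ≤ u)
    (𝒟 : Finset (Finset ℕ)) (h𝒟 : ∀ D ∈ 𝒟, D ⊆ U ∧ D.Nonempty)
    (𝒞 𝒞' : Finset (Finset ℕ))
    (seq : ℕ → Finset FV) (ℓ : ℕ)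
    (hseq : TJFeasSeq 𝒟 seq ℓ (tokenSet 𝒞) (tokenSet 𝒞'))
    (hmin : ∀ (seq' : ℕ → Finset FV) (ℓ' : ℕ),
      TJFeasSeq 𝒟 seq' ℓ' (tokenSet 𝒞) (tokenSet 𝒞') → ℓ ≤ ℓ')
    (i i' : ℕ) (hi' : i' ≤ ℓ) (hlt : i + 1 < i')
    (hci : CleanSet 𝒟 (seq i)) (hci' : CleanSet 𝒟 (seq i'))
    (hnc : ∀ j, i < j → j < i' → ¬ CleanSet 𝒟 (seq j)) :
    SplitOrMerge (𝒟.filter fun D => treeFull D (seq i))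
      (𝒟.filter fun D => treeFull D (seq i')) := by
  have h2 : ∀ D ∈ 𝒟, ∀ d ∈ D, 2 ≤ d := fun D hD d hd => by
    have := hU d ((h𝒟 D hD).1 hd); omega
  refine splitOrMerge_of_card_filter_mem_eq (hseq.filter_treeFull_ne hmin hi' hlt hci hci' hnc)
    (fun X hX => (h𝒟 X (by rw [← filter_or, mem_filter] at hX; exact hX.1)).2) ?_ fun s => ?_
  · rw [← card_union_of_disjoint disjoint_sdiff_sdiff]
    refine (hseq.feasible (by omega)).card_le_three_of_forall_treeMarked
      (hnc (i + 1) (by omega) (by omega)) fun X hX => ?_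
    by_contra hm
    have := hseq.treeFull_iff_of_not_treeMarked h2 (by omega) hi' hci hci' hnc hm
    simp only [mem_union, mem_sdiff, mem_filter] at hX
    tauto
  · have hpos : ∀ D ∈ 𝒟, ∀ d ∈ D, 0 < d := fun D hD d hd => by have := h2 D hD d hd; omega
    rw [← potential_of_cleanSet hci hpos, ← potential_of_cleanSet hci' hpos,
      hseq.potential_eq h2 (by omega), hseq.potential_eq h2 hi']

/-- Let `seq 0, …, seq ℓ` be a minimum-length TJ-sequence of
feasible sets from `tokenSet 𝒞` to `tokenSet 𝒞'` in `F(U, 𝒟)`, and for each index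
`n` let `𝒮 n = {D ∈ 𝒟 : T_D is full under seq n}`.  If `seq i` and `seq i'` are
clean, `i + 1 < i'`, and `seq j` is not clean for every `i < j < i'`, then
`𝒮 i'` is obtained from `𝒮 i` by a split or by a merge. -/
theorem stmt13 (U : Finset ℕ) (hU : ∀ u ∈ U, 3 ≤ u)
    (𝒟 : Finset (Finset ℕ)) (h𝒟 : ∀ D ∈ 𝒟, D ⊆ U ∧ D.Nonempty)
    (𝒞 𝒞' : Finset (Finset ℕ)) (h𝒞 : 𝒞 ⊆ 𝒟) (h𝒞' : 𝒞' ⊆ 𝒟)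
    (hec : ExactCover U 𝒞) (hec' : ExactCover U 𝒞')
    (seq : ℕ → Finset FV) (ℓ : ℕ)
    (hseq : TJFeasSeq 𝒟 seq ℓ (tokenSet 𝒞) (tokenSet 𝒞'))
    (hmin : ∀ (seq' : ℕ → Finset FV) (ℓ' : ℕ),
      TJFeasSeq 𝒟 seq' ℓ' (tokenSet 𝒞) (tokenSet 𝒞') → ℓ ≤ ℓ')
    (i i' : ℕ) (hi' : i' ≤ ℓ) (hlt : i + 1 < i')
    (hci : CleanSet 𝒟 (seq i)) (hci' : CleanSet 𝒟 (seq i'))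
    (hnc : ∀ j, i < j → j < i' → ¬ CleanSet 𝒟 (seq j)) :
    SplitOrMerge (𝒟.filter fun D => treeFull D (seq i))
      (𝒟.filter fun D => treeFull D (seq i')) :=
  stmt13_general U hU 𝒟 h𝒟 𝒞 𝒞' seq ℓ hseq hmin i i' hi' hlt hci hci' hnc
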